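/- arXiv:2503.10206 — 2 statements merged into one kernel-verified Lean document; each statement's English description precedes it below -/
import Mathlib

section
/- Every perfectly k-divisible graph G with clique number ω satisfies χ(G) ≤ C(ω + k - 1, k), where C denotes the binomial coefficient. -/
/-!
Induction on `k`, and for fixed `k` on a bound `n ≥ ω`. An induced subgraph `H` of a
perfectly `k`-divisible graph that is not stable splits as `X₁ ∪ X₂` with `ω(H[X₁]) ≤ n - 1`
and `H[X₂]` perfectly `(k-1)`-divisible, so by Pascal's rule it is coloured with
`C(n+k-2, k) + C(n+k-2, k-1) = C(n+k-1, k)` colours. The induction on `n` runs over the induced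
subgraphs `G[s]` of one fixed `G`: `H[X₁]` is again one of them, so one never needs that
perfect divisibility is hereditary.
-/

open SimpleGraph

universe u v

/-- A graph is perfect if every induced subgraph has chromatic number
equal to its clique number. -/
def IsPerfect {V : Type u} (G : SimpleGraph V) : Prop :=
  ∀ s : Set V, (G.induce s).chromaticNumber = ((G.induce s).cliqueNum : ℕ∞)

/-- A set of vertices is stable (independent) if no two of its vertices are adjacent. -/
def IsStableSet {V : Type u} (G : SimpleGraph V) (s : Set V) : Prop :=
  s.Pairwise fun x y => ¬ G.Adj x y

/-- `PerfectlyDiv k G`: `G` is perfectly `k`-divisible.  A graph is perfectly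
`1`-divisible iff it is perfect; for `k ≥ 2`, `G` is perfectly `k`-divisible iff for every
induced subgraph `H` of `G`, either `V(H)` is a stable set or it admits a partition
into `X₁, X₂` with `ω(H[X₁]) < ω(H)` and `H[X₂]` perfectly `(k-1)`-divisible.
(The value at `k = 0` is junk.) -/
def PerfectlyDiv : ℕ → {V : Type u} → SimpleGraph V → Prop
  | 0, _, _ => True
  | 1, _, G => IsPerfect G
  | (k+2), _V, G => ∀ s : Set _V,
      IsStableSet (G.induce s) Set.univ ∨
      ∃ X1 X2 : Set ↥s, X1 ∩ X2 = ∅ ∧ X1 ∪ X2 = Set.univ ∧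
        ((G.induce s).induce X1).cliqueNum < (G.induce s).cliqueNum ∧
        PerfectlyDiv (k+1) ((G.induce s).induce X2)

/-- `G` contains no induced subgraph isomorphic to `H`. -/
def IndFree {V : Type u} {W : Type v} (G : SimpleGraph V) (H : SimpleGraph W) : Prop :=
  ¬ ∃ s : Set V, Nonempty (H ≃g G.induce s)

/-- The stability (independence) number of a graph. -/
noncomputable def indepNum {V : Type u} (G : SimpleGraph V) : ℕ :=
  sSup {n | ∃ s : Finset V, IsStableSet G ↑s ∧ s.card = n}

namespace SimpleGraph

variable {V W : Type*} {G : SimpleGraph V} {H : SimpleGraph W}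

theorem Embedding.cliqueNum_le [Finite W] (f : G ↪g H) : G.cliqueNum ≤ H.cliqueNum := by
  obtain ⟨s, hs⟩ := G.exists_isNClique_cliqueNum
  have hclique : H.IsClique (s.map f.toEmbedding : Set W) := by
    rw [Finset.coe_map]
    rintro _ ⟨a, ha, rfl⟩ _ ⟨b, hb, rfl⟩ hne
    exact f.map_adj_iff.mpr (hs.isClique ha hb fun hab => hne (hab ▸ rfl))
  calc G.cliqueNum = (s.map f.toEmbedding).card := by rw [Finset.card_map, hs.card_eq]
    _ ≤ H.cliqueNum := hclique.card_le_cliqueNum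

theorem isEmpty_of_cliqueNum_eq_zero [Finite V] (h : G.cliqueNum = 0) : IsEmpty V := by
  refine not_nonempty_iff.mp fun ⟨v⟩ => ?_
  have : ({v} : Finset V).card ≤ G.cliqueNum :=
    IsClique.card_le_cliqueNum (tc := by simp)
  simp [h] at this

theorem colorable_add_of_union_eq_univ {X₁ X₂ : Set V} (hX : X₁ ∪ X₂ = Set.univ)
    {m n : ℕ} (h₁ : (G.induce X₁).Colorable m) (h₂ : (G.induce X₂).Colorable n) :
    G.Colorable (m + n) := by
  classical
  obtain ⟨c₁⟩ := h₁
  obtain ⟨c₂⟩ := h₂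
  have hX₂ : ∀ v, v ∉ X₁ → v ∈ X₂ := fun v hv =>
    (hX.ge (Set.mem_univ v)).resolve_left hv
  let c : G.Coloring (Fin m ⊕ Fin n) := Coloring.mk
    (fun v => if hv : v ∈ X₁ then .inl (c₁ ⟨v, hv⟩) else .inr (c₂ ⟨v, hX₂ v hv⟩))
    (fun {v w} hvw => by
      by_cases hv : v ∈ X₁ <;> by_cases hw : w ∈ X₁ <;>
        simp only [hv, hw, dite_true, dite_false]
      · exact fun h => c₁.valid (v := ⟨v, hv⟩) (w := ⟨w, hw⟩) hvw (Sum.inl_injective h)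
      · exact Sum.inl_ne_inr
      · exact Sum.inr_ne_inl
      · exact fun h => c₂.valid (v := ⟨v, hX₂ v hv⟩) (w := ⟨w, hX₂ w hw⟩) hvw
          (Sum.inr_injective h))
  simpa using c.colorable

end SimpleGraph

theorem eq_bot_of_isStableSet_univ {V : Type*} {G : SimpleGraph V}
    (h : IsStableSet G Set.univ) : G = ⊥ := by
  ext v w
  exact iff_of_false (fun hvw => h (Set.mem_univ v) (Set.mem_univ w) hvw.ne hvw) id

theorem IsPerfect.colorable {V : Type u} [Finite V] {G : SimpleGraph V} (hG : IsPerfect G)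
    {n : ℕ} (hn : G.cliqueNum ≤ n) : G.Colorable n := by
  rw [← chromaticNumber_le_iff_colorable, ← chromaticNumber_congr (induceUnivIso G),
    hG Set.univ, Nat.cast_le]
  exact (G.cliqueNum_induce_le Set.univ).trans hn

theorem PerfectlyDiv.colorable_induce_of_succ {k : ℕ}
    (ih : ∀ {W : Type u} [Finite W] {H : SimpleGraph W}, PerfectlyDiv (k + 1) H →
      ∀ {n : ℕ}, H.cliqueNum ≤ n → H.Colorable ((n + k).choose (k + 1)))
    {V : Type u} [Finite V] {G : SimpleGraph V} (hG : PerfectlyDiv (k + 2) G) (n : ℕ) :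
    ∀ s : Set V, (G.induce s).cliqueNum ≤ n →
      (G.induce s).Colorable ((n + (k + 1)).choose (k + 2)) := by
  induction n with
  | zero =>
    intro s hs
    have := isEmpty_of_cliqueNum_eq_zero (Nat.le_zero.mp hs)
    exact Colorable.of_isEmpty _
  | succ n ihn =>
    intro s hs
    rcases hG s with hstable | ⟨X₁, X₂, -, hX, hω₁, hX₂⟩
    · rw [eq_bot_of_isStableSet_univ hstable]
      exact (colorable_one_iff.mpr rfl).mono (Nat.choose_pos (by omega))
    · let f : (G.induce s).induce X₁ ↪g G :=
        (Embedding.induce (G := G) s).comp (Embedding.induce X₁)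
      have hω₁' : (G.induce (Set.range f)).cliqueNum ≤ n := Nat.le_of_lt_succ <|
        (f.isoInduceRange.symm.toEmbedding.cliqueNum_le.trans_lt hω₁).trans_le hs
      have h₁ : ((G.induce s).induce X₁).Colorable ((n + (k + 1)).choose (k + 2)) :=
        (colorable_congr f.isoInduceRange).mpr (ihn _ hω₁')
      have h₂ : ((G.induce s).induce X₂).Colorable ((n + 1 + k).choose (k + 1)) :=
        ih hX₂ (((G.induce s).cliqueNum_induce_le X₂).trans hs)
      have hpascal : (n + 1 + (k + 1)).choose (k + 2)
          = (n + (k + 1)).choose (k + 2) + (n + 1 + k).choose (k + 1) := by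
        rw [show n + 1 + (k + 1) = n + k + 1 + 1 by omega, Nat.choose_succ_succ',
          show n + (k + 1) = n + k + 1 by omega, show n + 1 + k = n + k + 1 by omega, add_comm]
      rw [hpascal]
      exact colorable_add_of_union_eq_univ hX h₁ h₂

theorem PerfectlyDiv.colorable :
    ∀ (k : ℕ) {V : Type u} [Finite V] {G : SimpleGraph V}, PerfectlyDiv (k + 1) G →
      ∀ {n : ℕ}, G.cliqueNum ≤ n → G.Colorable ((n + k).choose (k + 1))
  | 0, _, _, G, hG, n, hn => by
    simpa using IsPerfect.colorable hG hn
  | k + 1, _, _, G, hG, n, hn =>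
    (colorable_congr (induceUnivIso G)).mp <|
      colorable_induce_of_succ (colorable k) hG n Set.univ
        ((G.cliqueNum_induce_le _).trans hn)

theorem stmt_0 {V : Type u} [Fintype V] (G : SimpleGraph V) (k : ℕ) (hk : 1 ≤ k)
    (hG : PerfectlyDiv k G) :
    G.chromaticNumber ≤ ((G.cliqueNum + k - 1).choose k : ℕ∞) := by
  obtain ⟨j, rfl⟩ : ∃ j, k = j + 1 := ⟨k - 1, by omega⟩
  rw [show G.cliqueNum + (j + 1) - 1 = G.cliqueNum + j by omega]
  exact (PerfectlyDiv.colorable j hG le_rfl).chromaticNumber_le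
end

section
/- Every finite graph G with clique number ω and stability number α satisfies χ(G) ≤ C(ω + α - 1, α), where C denotes the binomial coefficient. -/
/-!
Induction on `ω + α`. For a vertex `v`, a maximum clique of its neighbourhood `N` extends by `v`,
so `ω(G[N]) < ω`; dually a maximum stable set among the non-neighbours `M` extends by `v`, so
`α(G[M]) < α`. Colouring `G[N]` and `G[M ∪ {v}]` with disjoint palettes (`v` is isolated in the
latter) gives `χ ≤ C(ω+α-2, α) + C(ω+α-2, α-1) = C(ω+α-1, α)` by Pascal's rule.
-/

open SimpleGraph

universe u v

namespace SimpleGraph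

section

variable {V : Type u} {G : SimpleGraph V}

lemma induce_compl (s : Set V) : (G.induce s)ᶜ = Gᶜ.induce s := by
  ext x y
  simp [Subtype.ext_iff]

lemma indepNum_induce_le [Finite V] (s : Set V) : (G.induce s).indepNum ≤ G.indepNum := by
  rw [← cliqueNum_compl, ← cliqueNum_compl, induce_compl]
  exact cliqueNum_induce_le s

lemma cliqueNum_induce_neighborSet_lt [Finite V] (v : V) :
    (G.induce (G.neighborSet v)).cliqueNum < G.cliqueNum := by
  classical
  obtain ⟨t, ht⟩ := (G.induce (G.neighborSet v)).exists_isNClique_cliqueNum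
  rw [isNClique_induce_iff] at ht
  have hv : v ∉ t.map (.subtype _) := by simp
  have hclique : G.IsClique (insert v (t.map (.subtype _)) : Finset V) := by
    rw [Finset.coe_insert, isClique_insert]
    refine ⟨ht.isClique, fun u hu _ => ?_⟩
    simp only [Finset.coe_map, Function.Embedding.coe_subtype, Set.mem_image] at hu
    obtain ⟨⟨u, hu⟩, -, rfl⟩ := hu
    exact hu
  have := hclique.card_le_cliqueNum
  rw [Finset.card_insert_of_notMem hv, ht.card_eq] at this
  omega

lemma indepNum_induce_compl_neighborSet_lt [Finite V] (v : V) :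
    (G.induce (Gᶜ.neighborSet v)).indepNum < G.indepNum := by
  rw [← cliqueNum_compl, ← cliqueNum_compl, induce_compl]
  exact cliqueNum_induce_neighborSet_lt v

lemma compl_neighborSet_eq_insert (v : V) :
    (G.neighborSet v)ᶜ = insert v (Gᶜ.neighborSet v) := by
  ext u
  by_cases h : u = v
  · simp [h]
  · simp [h, Ne.symm h]

lemma Colorable.of_induce_of_induce_compl {s : Set V} {m n : ℕ} (hs : (G.induce s).Colorable m)
    (hsc : (G.induce sᶜ).Colorable n) : G.Colorable (m + n) := by
  classical
  obtain ⟨C₁, hC₁⟩ := (colorable_iff_exists_bdd_nat_coloring m).mp hs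
  obtain ⟨C₂, hC₂⟩ := (colorable_iff_exists_bdd_nat_coloring n).mp hsc
  refine (colorable_iff_exists_bdd_nat_coloring _).mpr
    ⟨Coloring.mk (fun u => if h : u ∈ s then C₁ ⟨u, h⟩ else m + C₂ ⟨u, h⟩) ?_, fun u => ?_⟩
  · intro x y hxy
    by_cases hx : x ∈ s <;> by_cases hy : y ∈ s
    · rw [dif_pos hx, dif_pos hy]
      exact C₁.valid (induce_adj.mpr hxy)
    · rw [dif_pos hx, dif_neg hy]
      have := hC₁ ⟨x, hx⟩
      omega
    · rw [dif_neg hx, dif_pos hy]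
      have := hC₁ ⟨y, hy⟩
      omega
    · rw [dif_neg hx, dif_neg hy]
      exact fun h => C₂.valid (induce_adj.mpr hxy) (Nat.add_left_cancel h)
  · simp only [Coloring.mk, RelHom.coeFn_mk]
    split_ifs with hu
    · have := hC₁ ⟨u, hu⟩
      omega
    · have := hC₂ ⟨u, hu⟩
      omega

lemma Colorable.induce_insert {t : Set V} {v : V} {n : ℕ} (hv : ∀ u ∈ t, ¬G.Adj v u)
    (hn : n ≠ 0) (ht : (G.induce t).Colorable n) : (G.induce (insert v t)).Colorable n := by
  classical
  obtain ⟨C, hC⟩ := (colorable_iff_exists_bdd_nat_coloring n).mp ht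
  refine (colorable_iff_exists_bdd_nat_coloring _).mpr
    ⟨Coloring.mk (fun u => if h : ↑u ∈ t then C ⟨u, h⟩ else 0) ?_, fun u => ?_⟩
  · rintro ⟨x, hx⟩ ⟨y, hy⟩ hxy
    rw [induce_adj] at hxy
    by_cases hxt : x ∈ t <;> by_cases hyt : y ∈ t
    · simpa only [dif_pos hxt, dif_pos hyt] using C.valid (induce_adj.mpr hxy)
    · obtain rfl : y = v := by simpa [hyt] using hy
      exact absurd hxy.symm (hv x hxt)
    · obtain rfl : x = v := by simpa [hxt] using hx
      exact absurd hxy (hv y hyt)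
    · obtain rfl : x = v := by simpa [hxt] using hx
      obtain rfl : y = x := by simpa [hyt] using hy
      exact absurd hxy (G.loopless.irrefl _)
  · simp only [Coloring.mk, RelHom.coeFn_mk]
    split_ifs
    · exact hC _
    · omega

end

theorem colorable_choose_of_cliqueNum_le_of_indepNum_le {V : Type u} [Finite V]
    {G : SimpleGraph V} {w a : ℕ} (hw : G.cliqueNum ≤ w) (ha : G.indepNum ≤ a) : G.Colorable ((w + a - 1).choose a) := by
  cases isEmpty_or_nonempty V with
  | inl _ => exact .of_isEmpty _
  | inr hV =>
  obtain ⟨v⟩ := hV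
  have hωN := cliqueNum_induce_neighborSet_lt (G := G) v
  have hαM := indepNum_induce_compl_neighborSet_lt (G := G) v
  obtain ⟨w, rfl⟩ : ∃ w', w = w' + 1 := ⟨w - 1, by omega⟩
  obtain ⟨a, rfl⟩ : ∃ a', a = a' + 1 := ⟨a - 1, by omega⟩
  have colN : (G.induce (G.neighborSet v)).Colorable ((w + a).choose (a + 1)) := by
    simpa using colorable_choose_of_cliqueNum_le_of_indepNum_le
      (G := G.induce (G.neighborSet v)) (w := w) (a := a + 1)
      (by omega) ((indepNum_induce_le _).trans ha)
  have colM : (G.induce (Gᶜ.neighborSet v)).Colorable ((w + a).choose a) := by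
    simpa using colorable_choose_of_cliqueNum_le_of_indepNum_le
      (G := G.induce (Gᶜ.neighborSet v)) (w := w + 1) (a := a)
      ((cliqueNum_induce_le _).trans hw) (by omega)
  have colNc : (G.induce (G.neighborSet v)ᶜ).Colorable ((w + a).choose a) := by
    rw [compl_neighborSet_eq_insert]
    refine colM.induce_insert (fun u hu => ?_) (Nat.choose_pos (by omega)).ne'
    exact ((mem_neighborSet _ _ _).mp hu).2
  rw [show w + 1 + (a + 1) - 1 = w + a + 1 by omega, Nat.choose_succ_succ', add_comm]
  exact colN.of_induce_of_induce_compl colNc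
termination_by w + a

end SimpleGraph

lemma indepNum_eq_simpleGraph_indepNum {V : Type u} (G : SimpleGraph V) :
    _root_.indepNum G = G.indepNum := by
  simp only [_root_.indepNum, SimpleGraph.indepNum, isNIndepSet_iff]
  rfl

theorem stmt_5 {V : Type u} [Fintype V] (G : SimpleGraph V) :
    G.chromaticNumber ≤ ((G.cliqueNum + _root_.indepNum G - 1).choose (_root_.indepNum G) : ℕ∞) := by
  rw [chromaticNumber_le_iff_colorable, indepNum_eq_simpleGraph_indepNum]
  exact colorable_choose_of_cliqueNum_le_of_indepNum_le le_rfl le_rfl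
end
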